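/- arXiv:2401.05962 — 2 statements merged into one kernel-verified Lean document; each statement's English description precedes it below -/
import Mathlib

section
/- Let Δ be a simplicial complex and σ ∈ Δ a face such that H̃_j(link_Δ σ) ≠ 0 for some j ≥ 0. Then there exists a chain of faces σ = τ_j ⊊ τ_{j−1} ⊊ … ⊊ τ_0 ⊊ τ_{−1} in Δ such that for each −1 ≤ i ≤ j, H̃_i(link_Δ τ_i) ≠ 0. -/
open Finset
open scoped Classical

/-- An abstract simplicial complex: a collection of finite subsets of the
vertex type `V` closed under taking subsets. -/
def IsComplex {V : Type} (K : Set (Finset V)) : Prop :=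
  ∀ s ∈ K, ∀ t ⊆ s, t ∈ K

/-- The link of a face `σ` in `K`: all faces `τ` disjoint from `σ` with `σ ∪ τ ∈ K`. -/
def link {V : Type} [DecidableEq V] (K : Set (Finset V)) (σ : Finset V) : Set (Finset V) :=
  {τ | Disjoint σ τ ∧ σ ∪ τ ∈ K}

theorem link_isComplex {V : Type} [DecidableEq V] {K : Set (Finset V)} (hK : IsComplex K)
    (σ : Finset V) : IsComplex (link K σ) := by
  intro s hs t ht
  exact ⟨hs.1.mono_right ht, hK _ hs.2 _ (Finset.union_subset_union_right ht)⟩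

/-- The incidence sign of a vertex `x` with respect to a face `σ`, relative to a fixed
(arbitrary) well-ordering of the vertices. -/
noncomputable def bdrySign {V : Type} (σ : Finset V) (x : V) : ℤ :=
  (-1 : ℤ) ^ (σ.filter (fun y => WellOrderingRel y x)).card

/-- The total (reduced) simplicial chain module of `K` with coefficients in `𝕜`:
functions from the faces of `K` (including the empty face) to `𝕜`. -/
abbrev TotalChains (𝕜 : Type) [Field 𝕜] {V : Type} (K : Set (Finset V)) : Type :=
  {s : Finset V // s ∈ K} → 𝕜

/-- The simplicial boundary operator on the total chain module, written in terms of
cofaces: `(∂c)(τ) = Σ_{x ∉ τ, τ ∪ {x} ∈ K} ± c(τ ∪ {x})`. -/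
noncomputable def bdryMap (𝕜 : Type) [Field 𝕜] {V : Type} [DecidableEq V] [Fintype V]
    (K : Set (Finset V)) : TotalChains 𝕜 K →ₗ[𝕜] TotalChains 𝕜 K where
  toFun c := fun τ => ∑ x ∈ τ.1ᶜ,
    if h : insert x τ.1 ∈ K then bdrySign τ.1 x • c ⟨insert x τ.1, h⟩ else 0
  map_add' c d := by
    funext τ
    rw [Pi.add_apply, ← Finset.sum_add_distrib]
    refine Finset.sum_congr rfl fun x _ => ?_
    split
    · rw [Pi.add_apply, smul_add]
    · rw [add_zero]
  map_smul' a c := by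
    funext τ
    rw [RingHom.id_apply, Pi.smul_apply, Finset.smul_sum]
    refine Finset.sum_congr rfl fun x _ => ?_
    split
    · rw [Pi.smul_apply, smul_comm]
    · rw [smul_zero]

/-- The submodule of chains supported on faces of cardinality `i + 1`
(the chains of homological degree `i`). -/
def degChains (𝕜 : Type) [Field 𝕜] {V : Type} (K : Set (Finset V)) (i : ℤ) :
    Submodule 𝕜 (TotalChains 𝕜 K) where
  carrier := {c | ∀ τ : {s : Finset V // s ∈ K}, (τ.1.card : ℤ) ≠ i + 1 → c τ = 0}
  add_mem' := by
    intro a b ha hb τ hτ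
    rw [Pi.add_apply, ha τ hτ, hb τ hτ, add_zero]
  zero_mem' := fun τ _ => rfl
  smul_mem' := by
    intro a c hc τ hτ
    rw [Pi.smul_apply, hc τ hτ, smul_zero]

/-- The `i`-th reduced simplicial homology of the complex `K` over the field `𝕜`:
degree-`i` cycles modulo boundaries of degree-`(i+1)` chains. -/
noncomputable abbrev redHomology (𝕜 : Type) [Field 𝕜] {V : Type} [DecidableEq V] [Fintype V]
    (K : Set (Finset V)) (i : ℤ) : Type :=
  ↥(degChains 𝕜 K i ⊓ LinearMap.ker (bdryMap 𝕜 K)) ⧸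
    Submodule.comap (degChains 𝕜 K i ⊓ LinearMap.ker (bdryMap 𝕜 K)).subtype
      (Submodule.map (bdryMap 𝕜 K) (degChains 𝕜 K (i + 1)))

/-! For a vertex `v` of `K`, the reduced chains form a short exact sequence
`0 → C(K ∖ v) → C(K) → C(link_K v)[-1] → 0`, whose long exact sequence gives:
* if `H̃_i(K) ≠ 0` then `H̃_i(K ∖ v) ≠ 0` or `H̃_{i-1}(link_K v) ≠ 0`;
* if `H̃_i(K ∖ v) ≠ 0` then `H̃_i(K) ≠ 0` or `H̃_i(link_K v) ≠ 0`.
Inducting on `K` with these two facts and `link_{K ∖ v} ρ = link_K ρ ∖ v`, a nonvanishing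
`H̃_i(K)` with `i ≥ 0` yields a nonempty face `ρ` with `H̃_{i-1}(link_K ρ) ≠ 0` (take `ρ = {v}`,
or `ρ` or `ρ ∪ {v}` for the face `ρ` found in `K ∖ v`). Since `link_{link_K σ} ρ = link_K (σ ∪ ρ)`,
iterating this from `σ` builds the chain one degree at a time. -/

section Signs

variable {V : Type}

lemma bdrySign_mul_self (σ : Finset V) (x : V) : bdrySign σ x * bdrySign σ x = 1 := by
  rw [bdrySign, ← pow_add]
  exact Even.neg_one_pow ⟨_, rfl⟩

lemma bdrySign_smul_bdrySign_smul {M : Type} [AddCommGroup M] (σ : Finset V) (x : V) (a : M) :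
    bdrySign σ x • bdrySign σ x • a = a := by
  rw [smul_smul, bdrySign_mul_self, one_smul]

variable [DecidableEq V]

lemma bdrySign_insert {σ : Finset V} {x : V} (hx : x ∉ σ) (y : V) :
    bdrySign (insert x σ) y = (if WellOrderingRel x y then -1 else 1) * bdrySign σ y := by
  unfold bdrySign
  rw [filter_insert]
  split
  · rw [card_insert_of_notMem (fun h => hx (mem_filter.1 h).1), pow_succ]
    ring
  · rw [one_mul]

lemma bdrySign_mul_bdrySign_insert_add {τ : Finset V} {x y : V} (hxy : x ≠ y) (hx : x ∉ τ)
    (hy : y ∉ τ) :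
    bdrySign τ x * bdrySign (insert x τ) y + bdrySign τ y * bdrySign (insert y τ) x = 0 := by
  rw [bdrySign_insert hx, bdrySign_insert hy]
  rcases trichotomous_of WellOrderingRel x y with h | rfl | h
  · simp only [if_pos h, if_neg (asymm h)]
    ring
  · exact absurd rfl hxy
  · simp only [if_neg (asymm h), if_pos h]
    ring

end Signs

section Complexes

variable {V : Type}

def deletion (K : Set (Finset V)) (v : V) : Set (Finset V) := {s | s ∈ K ∧ v ∉ s}

lemma deletion_subset (K : Set (Finset V)) (v : V) : deletion K v ⊆ K := fun _ h => h.1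

lemma deletion_ssubset {K : Set (Finset V)} {v : V} (hv : {v} ∈ K) : deletion K v ⊂ K :=
  ⟨deletion_subset K v, fun h => (h hv).2 (mem_singleton_self v)⟩

lemma IsComplex.deletion {K : Set (Finset V)} (hK : IsComplex K) (v : V) :
    IsComplex (deletion K v) :=
  fun _ hs t ht => ⟨hK _ hs.1 t ht, fun hv => hs.2 (ht hv)⟩

variable [DecidableEq V]

lemma link_deletion {K : Set (Finset V)} {v : V} {ρ : Finset V} (hv : v ∉ ρ) :
    link (deletion K v) ρ = deletion (link K ρ) v := by
  ext τ
  simp only [link, deletion, Set.mem_ofPred_eq, mem_union, not_or]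
  tauto

lemma link_link {K : Set (Finset V)} {σ ρ : Finset V} (h : Disjoint σ ρ) :
    link (link K σ) ρ = link K (σ ∪ ρ) := by
  ext τ
  simp only [link, Set.mem_ofPred_eq, disjoint_union_left, disjoint_union_right, union_assoc]
  tauto

lemma mem_link_singleton {K : Set (Finset V)} {v : V} {ρ : Finset V} :
    ρ ∈ link K {v} ↔ v ∉ ρ ∧ insert v ρ ∈ K := by
  rw [link, Set.mem_ofPred_eq, disjoint_singleton_left, insert_eq]

lemma mem_of_mem_link {K : Set (Finset V)} (hK : IsComplex K) {σ ρ : Finset V}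
    (hρ : ρ ∈ link K σ) : σ ∈ K :=
  hK _ hρ.2 σ subset_union_left

end Complexes

section ChainsOnFinsets

variable (𝕜 : Type) [Field 𝕜] {V : Type}

/-- Chains of `K` in degree `i` are modelled as functions on all finsets supported on the
faces of `K` with `i + 1` vertices, so that chains of subcomplexes are chains of `K`. -/
def chains (K : Set (Finset V)) (i : ℤ) : Submodule 𝕜 (Finset V → 𝕜) where
  carrier := {f | Function.support f ⊆ {s | s ∈ K ∧ (s.card : ℤ) = i + 1}}
  add_mem' hf hg := (Function.support_add _ _).trans (Set.union_subset hf hg)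
  zero_mem' := by simp
  smul_mem' a _ hf := (Function.support_const_smul_subset a _).trans hf

variable {𝕜}

lemma chains_mono {K L : Set (Finset V)} (hKL : K ⊆ L) (i : ℤ) : chains 𝕜 K i ≤ chains 𝕜 L i :=
  fun _ hf _ hs => ⟨hKL (hf hs).1, (hf hs).2⟩

variable (𝕜) [DecidableEq V] [Fintype V]

noncomputable def boundary : (Finset V → 𝕜) →ₗ[𝕜] (Finset V → 𝕜) where
  toFun f τ := ∑ x ∈ τᶜ, bdrySign τ x • f (insert x τ)
  map_add' f g := by
    funext τ
    simp only [Pi.add_apply, smul_add, sum_add_distrib]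
  map_smul' a f := by
    funext τ
    simp only [Pi.smul_apply, RingHom.id_apply, smul_sum, smul_comm a]

def HasNonboundingCycle (K : Set (Finset V)) (i : ℤ) : Prop :=
  ∃ f ∈ chains 𝕜 K i, boundary 𝕜 f = 0 ∧ f ∉ (chains 𝕜 K (i + 1)).map (boundary 𝕜)

variable {𝕜}

lemma boundary_apply (f : Finset V → 𝕜) (τ : Finset V) :
    boundary 𝕜 f τ = ∑ x ∈ τᶜ, bdrySign τ x • f (insert x τ) :=
  rfl

lemma boundary_mem_chains {K : Set (Finset V)} (hK : IsComplex K) {i : ℤ} {f : Finset V → 𝕜}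
    (hf : f ∈ chains 𝕜 K (i + 1)) : boundary 𝕜 f ∈ chains 𝕜 K i := by
  intro τ hτ
  obtain ⟨x, hx, hfx⟩ := exists_ne_zero_of_sum_ne_zero hτ
  obtain ⟨hxK, hcard⟩ := hf (right_ne_zero_of_smul hfx)
  rw [card_insert_of_notMem (mem_compl.1 hx)] at hcard
  exact ⟨hK _ hxK τ (subset_insert x τ), by push_cast at hcard; linarith⟩

/-- The terms for removing `x` then `y` and `y` then `x` cancel in pairs. -/
lemma boundary_boundary (f : Finset V → 𝕜) : boundary 𝕜 (boundary 𝕜 f) = 0 := by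
  funext τ
  have expand : ∀ x ∈ τᶜ, bdrySign τ x • boundary 𝕜 f (insert x τ) = ∑ y ∈ τᶜ,
      if x ≠ y then (bdrySign τ x * bdrySign (insert x τ) y) • f (insert y (insert x τ))
      else 0 := by
    intro x _
    rw [boundary_apply, smul_sum, compl_insert, ← filter_ne, sum_filter]
    refine sum_congr rfl fun y _ => ?_
    split <;> simp only [smul_smul]
  rw [boundary_apply, sum_congr rfl expand, ← sum_product', ← sum_filter, Pi.zero_apply]
  refine sum_involution (fun p _ => (p.2, p.1)) ?_ ?_ ?_ fun _ _ => rfl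
  · rintro ⟨x, y⟩ hp
    simp only [mem_filter, mem_product, mem_compl] at hp
    rw [insert_comm, ← add_smul, bdrySign_mul_bdrySign_insert_add hp.2 hp.1.1 hp.1.2, zero_smul]
  · rintro ⟨x, y⟩ hp _ hc
    exact (mem_filter.1 hp).2 (congrArg Prod.fst hc).symm
  · rintro ⟨x, y⟩ hp
    simp only [mem_filter, mem_product] at hp ⊢
    exact ⟨⟨hp.1.2, hp.1.1⟩, Ne.symm hp.2⟩

lemma HasNonboundingCycle.exists_mem {K : Set (Finset V)} {i : ℤ}
    (h : HasNonboundingCycle 𝕜 K i) : ∃ s ∈ K, (s.card : ℤ) = i + 1 := by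
  obtain ⟨f, hf, -, hnb⟩ := h
  obtain ⟨s, hs⟩ : ∃ s, f s ≠ 0 := by
    by_contra! hzero
    exact hnb ⟨0, zero_mem _, by rw [map_zero]; exact (funext hzero).symm⟩
  exact ⟨s, hf hs⟩

lemma HasNonboundingCycle.exists_vertex {K : Set (Finset V)} (hK : IsComplex K) {i : ℤ}
    (h : HasNonboundingCycle 𝕜 K i) (hi : 0 ≤ i) : ∃ v, {v} ∈ K := by
  obtain ⟨s, hs, hcard⟩ := h.exists_mem
  obtain ⟨v, hv⟩ : s.Nonempty := card_pos.1 (by omega)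
  exact ⟨v, hK _ hs _ (singleton_subset_iff.2 hv)⟩

lemma HasNonboundingCycle.mem_of_link {K : Set (Finset V)} (hK : IsComplex K) {σ : Finset V}
    {i : ℤ} (h : HasNonboundingCycle 𝕜 (link K σ) i) : σ ∈ K := by
  obtain ⟨ρ, hρ, -⟩ := h.exists_mem
  exact mem_of_mem_link hK hρ

end ChainsOnFinsets

section LinkOfVertex

variable {𝕜 : Type} [Field 𝕜] {V : Type} [DecidableEq V]

/-- The component of a chain along the star of `v`, read as a chain of the link of `v`:
a chain of `K` is `f = f_del + v * linkPart v f` with `f_del` a chain of `deletion K v`. -/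
noncomputable def linkPart (v : V) : (Finset V → 𝕜) →ₗ[𝕜] (Finset V → 𝕜) where
  toFun f ρ := if v ∈ ρ then 0 else bdrySign ρ v • f (insert v ρ)
  map_add' f g := by
    funext ρ
    by_cases hv : v ∈ ρ <;> simp [hv, smul_add]
  map_smul' a f := by
    funext ρ
    by_cases hv : v ∈ ρ <;> simp [hv, mul_left_comm]

noncomputable def join (v : V) (g : Finset V → 𝕜) (s : Finset V) : 𝕜 :=
  if v ∈ s then bdrySign (s.erase v) v • g (s.erase v) else 0

lemma linkPart_apply (v : V) (f : Finset V → 𝕜) (ρ : Finset V) :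
    linkPart v f ρ = if v ∈ ρ then 0 else bdrySign ρ v • f (insert v ρ) :=
  rfl

lemma linkPart_mem_chains {K : Set (Finset V)} {v : V} {i : ℤ} {f : Finset V → 𝕜}
    (hf : f ∈ chains 𝕜 K i) : linkPart v f ∈ chains 𝕜 (link K {v}) (i - 1) := by
  intro ρ hρ
  rw [Function.mem_support, linkPart_apply] at hρ
  split_ifs at hρ with hv
  · exact absurd rfl hρ
  obtain ⟨hK, hcard⟩ := hf (right_ne_zero_of_smul hρ)
  rw [card_insert_of_notMem hv] at hcard
  exact ⟨mem_link_singleton.2 ⟨hv, hK⟩, by push_cast at hcard; linarith⟩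

lemma join_mem_chains {K : Set (Finset V)} {v : V} {i : ℤ} {g : Finset V → 𝕜}
    (hg : g ∈ chains 𝕜 (link K {v}) i) : join v g ∈ chains 𝕜 K (i + 1) := by
  intro s hs
  rw [Function.mem_support, join] at hs
  split_ifs at hs with hv
  · obtain ⟨hlink, hcard⟩ := hg (right_ne_zero_of_smul hs)
    rw [card_erase_of_mem hv] at hcard
    refine ⟨insert_erase hv ▸ (mem_link_singleton.1 hlink).2, ?_⟩
    have := card_pos.2 ⟨v, hv⟩
    push_cast [this] at hcard
    linarith
  · exact absurd rfl hs

lemma linkPart_join {K : Set (Finset V)} {v : V} {i : ℤ} {g : Finset V → 𝕜}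
    (hg : g ∈ chains 𝕜 (link K {v}) i) : linkPart v (join v g) = g := by
  funext ρ
  rw [linkPart_apply]
  split_ifs with hv
  · by_contra hρ
    exact (mem_link_singleton.1 (hg (Ne.symm hρ)).1).1 hv
  · rw [join, if_pos (mem_insert_self v ρ), erase_insert hv, bdrySign_smul_bdrySign_smul]

lemma mem_chains_deletion_iff {K : Set (Finset V)} {v : V} {i : ℤ} {f : Finset V → 𝕜}
    (hf : f ∈ chains 𝕜 K i) : f ∈ chains 𝕜 (deletion K v) i ↔ linkPart v f = 0 := by
  constructor
  · intro hdel
    funext ρ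
    rw [linkPart_apply]
    split_ifs with hv
    · rfl
    · by_contra hρ
      exact (hdel (right_ne_zero_of_smul hρ)).1.2 (mem_insert_self v ρ)
  · intro hzero s hs
    refine ⟨⟨(hf hs).1, fun hv => hs ?_⟩, (hf hs).2⟩
    have hρ := congrFun hzero (s.erase v)
    rw [linkPart_apply, if_neg (notMem_erase v s), insert_erase hv, Pi.zero_apply] at hρ
    rw [← bdrySign_smul_bdrySign_smul (s.erase v) v (f s), hρ, smul_zero]

variable [Fintype V]

lemma boundary_linkPart (v : V) (f : Finset V → 𝕜) :
    boundary 𝕜 (linkPart v f) = -linkPart v (boundary 𝕜 f) := by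
  funext ρ
  rw [Pi.neg_apply, boundary_apply, linkPart_apply]
  by_cases hv : v ∈ ρ
  · rw [if_pos hv, neg_zero]
    refine sum_eq_zero fun x _ => ?_
    rw [linkPart_apply, if_pos (mem_insert_of_mem hv), smul_zero]
  rw [if_neg hv, ← add_sum_erase _ _ (mem_compl.2 hv), linkPart_apply,
    if_pos (mem_insert_self v ρ), smul_zero, zero_add, boundary_apply, compl_insert, smul_sum,
    ← sum_neg_distrib]
  refine sum_congr rfl fun x hx => ?_
  have hxv : x ≠ v := ne_of_mem_erase hx
  have hxρ : x ∉ ρ := mem_compl.1 (mem_of_mem_erase hx)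
  rw [linkPart_apply, if_neg (by simp [hxv.symm, hv]), smul_smul, smul_smul, insert_comm,
    eq_neg_of_add_eq_zero_left (bdrySign_mul_bdrySign_insert_add hxv hxρ hv), neg_smul]

lemma add_boundary_join_mem_chains_deletion {K : Set (Finset V)} (hK : IsComplex K) {v : V}
    {i : ℤ} {f x : Finset V → 𝕜} (hf : f ∈ chains 𝕜 K i) (hx : x ∈ chains 𝕜 (link K {v}) i)
    (hfx : linkPart v f = boundary 𝕜 x) :
    f + boundary 𝕜 (join v x) ∈ chains 𝕜 (deletion K v) i := by
  have hmem : f + boundary 𝕜 (join v x) ∈ chains 𝕜 K i :=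
    add_mem hf (boundary_mem_chains hK (join_mem_chains hx))
  rw [mem_chains_deletion_iff hmem, map_add,
    neg_eq_iff_eq_neg.1 (boundary_linkPart v (join v x)).symm, linkPart_join hx, hfx,
    add_neg_cancel]

lemma HasNonboundingCycle.deletion_or_link {K : Set (Finset V)} (hK : IsComplex K) (v : V)
    {i : ℤ} (h : HasNonboundingCycle 𝕜 K i) :
    HasNonboundingCycle 𝕜 (deletion K v) i ∨ HasNonboundingCycle 𝕜 (link K {v}) (i - 1) := by
  obtain ⟨f, hf, hcycle, hnb⟩ := h
  by_cases hbounds : linkPart v f ∈ (chains 𝕜 (link K {v}) (i - 1 + 1)).map (boundary 𝕜)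
  · obtain ⟨x, hx, hxf⟩ := hbounds
    rw [sub_add_cancel] at hx
    refine .inl ⟨f + boundary 𝕜 (join v x), add_boundary_join_mem_chains_deletion hK hf hx
      hxf.symm, by rw [map_add, hcycle, boundary_boundary, add_zero], ?_⟩
    rintro ⟨g, hg, hgf⟩
    refine hnb ⟨g - join v x, sub_mem (chains_mono (deletion_subset K v) _ hg)
      (join_mem_chains hx), ?_⟩
    rw [map_sub, hgf, add_sub_cancel_right]
  · exact .inr ⟨linkPart v f, linkPart_mem_chains hf,
      by rw [boundary_linkPart, hcycle, map_zero, neg_zero], hbounds⟩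

lemma HasNonboundingCycle.of_deletion {K : Set (Finset V)} (hK : IsComplex K) {v : V} {i : ℤ}
    (h : HasNonboundingCycle 𝕜 (deletion K v) i) :
    HasNonboundingCycle 𝕜 K i ∨ HasNonboundingCycle 𝕜 (link K {v}) i := by
  obtain ⟨f, hf, hcycle, hnb⟩ := h
  by_cases hbounds : f ∈ (chains 𝕜 K (i + 1)).map (boundary 𝕜)
  · obtain ⟨u, hu, huf⟩ := hbounds
    refine .inr ⟨linkPart v u, by simpa using linkPart_mem_chains hu, ?_, ?_⟩
    · rw [boundary_linkPart, huf, (mem_chains_deletion_iff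
        (chains_mono (deletion_subset K v) i hf)).1 hf, neg_zero]
    · rintro ⟨x, hx, hxu⟩
      exact hnb ⟨u + boundary 𝕜 (join v x), add_boundary_join_mem_chains_deletion hK hu hx
        hxu.symm, by rw [map_add, boundary_boundary, add_zero, huf]⟩
  · exact .inl ⟨f, chains_mono (deletion_subset K v) i hf, hcycle, hbounds⟩

lemma HasNonboundingCycle.exists_link {K : Set (Finset V)} (hK : IsComplex K) {i : ℤ}
    (hi : 0 ≤ i) (h : HasNonboundingCycle 𝕜 K i) :
    ∃ ρ ∈ K, ρ.Nonempty ∧ HasNonboundingCycle 𝕜 (link K ρ) (i - 1) := by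
  induction K using WellFoundedLT.induction with
  | ind K ih =>
    obtain ⟨v, hv⟩ := h.exists_vertex hK hi
    rcases h.deletion_or_link hK v with hdel | hlink
    · obtain ⟨ρ, ⟨hρK, hvρ⟩, hρne, hρ⟩ :=
        ih (deletion K v) (deletion_ssubset hv) (hK.deletion v) hdel
      rw [link_deletion hvρ] at hρ
      rcases hρ.of_deletion (link_isComplex hK ρ) with hρ | hρv
      · exact ⟨ρ, hρK, hρne, hρ⟩
      · rw [link_link (disjoint_singleton_right.2 hvρ)] at hρv
        exact ⟨ρ ∪ {v}, hρv.mem_of_link hK, hρne.mono subset_union_left, hρv⟩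
    · exact ⟨{v}, hv, singleton_nonempty v, hlink⟩

end LinkOfVertex

section ReducedHomology

variable {𝕜 : Type} [Field 𝕜] {V : Type} {K : Set (Finset V)}

variable (K) in
noncomputable def extendByZero : TotalChains 𝕜 K →ₗ[𝕜] (Finset V → 𝕜) :=
  Function.ExtendByZero.linearMap 𝕜 Subtype.val

lemma extendByZero_apply (c : TotalChains 𝕜 K) (s : Finset V) :
    extendByZero K c s = if h : s ∈ K then c ⟨s, h⟩ else 0 := by
  rw [extendByZero, Function.ExtendByZero.linearMap_apply]
  split_ifs with h
  · exact Subtype.val_injective.extend_apply c 0 ⟨s, h⟩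
  · exact Function.extend_apply' _ _ _ fun ⟨t, ht⟩ => h (ht ▸ t.2)

lemma extendByZero_restrict {i : ℤ} {f : Finset V → 𝕜} (hf : f ∈ chains 𝕜 K i) :
    extendByZero K (fun s => f s.1) = f := by
  funext s
  rw [extendByZero_apply]
  split_ifs with h
  · rfl
  · by_contra hs
    exact h (hf (Ne.symm hs)).1

lemma extendByZero_injective : Function.Injective (extendByZero (𝕜 := 𝕜) K) := by
  intro c d hcd
  funext s
  simpa [extendByZero_apply, s.2] using congrFun hcd s.1

lemma mem_degChains_iff {i : ℤ} {c : TotalChains 𝕜 K} :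
    c ∈ degChains 𝕜 K i ↔ extendByZero K c ∈ chains 𝕜 K i := by
  constructor
  · intro hc s hs
    rw [Function.mem_support, extendByZero_apply] at hs
    split_ifs at hs with h
    · exact ⟨h, by_contra fun hcard => hs (hc _ hcard)⟩
    · exact absurd rfl hs
  · intro hc s hcard
    by_contra hs
    refine hcard (hc (?_ : extendByZero K c s.1 ≠ 0)).2
    rwa [extendByZero_apply, dif_pos s.2]

variable [DecidableEq V] [Fintype V]

lemma extendByZero_bdryMap (hK : IsComplex K) (c : TotalChains 𝕜 K) :
    extendByZero K (bdryMap 𝕜 K c) = boundary 𝕜 (extendByZero K c) := by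
  funext τ
  rw [extendByZero_apply, boundary_apply]
  split_ifs with hτ
  · refine sum_congr rfl fun x _ => ?_
    rw [extendByZero_apply]
    split_ifs <;> simp
  · refine (sum_eq_zero fun x _ => ?_).symm
    rw [extendByZero_apply, dif_neg fun h => hτ (hK _ h τ (subset_insert x τ)), smul_zero]

lemma nontrivial_redHomology_iff_exists {i : ℤ} :
    Nontrivial (redHomology 𝕜 K i) ↔
      ∃ c ∈ degChains 𝕜 K i, bdryMap 𝕜 K c = 0 ∧
        c ∉ Submodule.map (bdryMap 𝕜 K) (degChains 𝕜 K (i + 1)) := by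
  rw [← not_subsingleton_iff_nontrivial, Submodule.Quotient.subsingleton_iff,
    Submodule.eq_top_iff']
  simp only [Submodule.mem_comap, Submodule.coe_subtype, not_forall, Subtype.exists,
    Submodule.mem_inf, LinearMap.mem_ker, exists_prop, and_assoc]

lemma nontrivial_redHomology_iff (hK : IsComplex K) {i : ℤ} :
    Nontrivial (redHomology 𝕜 K i) ↔ HasNonboundingCycle 𝕜 K i := by
  rw [nontrivial_redHomology_iff_exists]
  constructor
  · rintro ⟨c, hc, hcycle, hnb⟩
    refine ⟨extendByZero K c, mem_degChains_iff.1 hc,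
      by rw [← extendByZero_bdryMap hK, hcycle, map_zero], ?_⟩
    rintro ⟨g, hg, hgc⟩
    refine hnb ⟨fun s => g s.1, mem_degChains_iff.2 (by rwa [extendByZero_restrict hg]), ?_⟩
    apply extendByZero_injective
    rw [extendByZero_bdryMap hK, extendByZero_restrict hg, hgc]
  · rintro ⟨f, hf, hcycle, hnb⟩
    refine ⟨fun s => f s.1, mem_degChains_iff.2 (by rwa [extendByZero_restrict hf]), ?_, ?_⟩
    · apply extendByZero_injective
      rw [extendByZero_bdryMap hK, extendByZero_restrict hf, hcycle, map_zero]
    · rintro ⟨c, hc, hcf⟩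
      exact hnb ⟨extendByZero K c, mem_degChains_iff.1 hc,
        by rw [← extendByZero_bdryMap hK, hcf, extendByZero_restrict hf]⟩

end ReducedHomology

theorem descending_homology_chain_general (𝕜 : Type) [Field 𝕜] {V : Type} [DecidableEq V]
    [Fintype V] (K : Set (Finset V)) (hK : IsComplex K) (σ : Finset V)
    (j : ℤ) (hj : 0 ≤ j) (h : Nontrivial (redHomology 𝕜 (link K σ) j)) :
    ∃ τ : ℤ → Finset V, τ j = σ ∧
      (∀ i : ℤ, -1 ≤ i → i ≤ j →
        τ i ∈ K ∧ Nontrivial (redHomology 𝕜 (link K (τ i)) i)) ∧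
      (∀ i : ℤ, 0 ≤ i → i ≤ j → τ i ⊂ τ (i - 1)) := by
  simp only [fun ρ i => nontrivial_redHomology_iff (𝕜 := 𝕜) (i := i) (link_isComplex hK ρ)] at h ⊢
  replace hj : -1 ≤ j := by omega
  induction j, hj using Int.leInduction generalizing σ with
  | base =>
    refine ⟨fun _ => σ, rfl, fun i hi hij => ?_, fun i hi hij => by omega⟩
    obtain rfl : i = -1 := by omega
    exact ⟨h.mem_of_link hK, h⟩
  | succ j hj ih =>
    obtain ⟨ρ, hρ, hρne, hρh⟩ := h.exists_link (link_isComplex hK σ) (by omega)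
    rw [link_link hρ.1, add_sub_cancel_right] at hρh
    obtain ⟨τ, hτj, hτh, hτs⟩ := ih (σ ∪ ρ) hρh
    refine ⟨Function.update τ (j + 1) σ, by simp, fun i hi hij => ?_, fun i hi hij => ?_⟩
    · rcases hij.eq_or_lt with rfl | hlt
      · simpa using ⟨h.mem_of_link hK, h⟩
      · rw [Function.update_of_ne hlt.ne]
        exact hτh i hi (by omega)
    · rw [Function.update_of_ne (by omega : i - 1 ≠ j + 1)]
      rcases hij.eq_or_lt with rfl | hlt
      · rw [Function.update_self, add_sub_cancel_right, hτj]
        obtain ⟨x, hx⟩ := hρne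
        exact (ssubset_iff_of_subset subset_union_left).2
          ⟨x, mem_union_right σ hx, disjoint_right.1 hρ.1 hx⟩
      · rw [Function.update_of_ne hlt.ne]
        exact hτs i hi (by omega)

/-- **Descending homology chains.** If the link of `σ` in `Δ` has nontrivial reduced
homology in degree `j ≥ 0`, then there is a chain of faces
`σ = τ_j ⊊ τ_{j-1} ⊊ ⋯ ⊊ τ_0 ⊊ τ_{-1}` in `Δ` such that for each `-1 ≤ i ≤ j` the link
of `τ_i` has nontrivial reduced homology in degree `i`. -/
theorem descending_homology_chain (𝕜 : Type) [Field 𝕜] {V : Type} [DecidableEq V]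
    [Fintype V] (K : Set (Finset V)) (hK : IsComplex K) (σ : Finset V) (hσ : σ ∈ K)
    (j : ℤ) (hj : 0 ≤ j) (h : Nontrivial (redHomology 𝕜 (link K σ) j)) :
    ∃ τ : ℤ → Finset V, τ j = σ ∧
      (∀ i : ℤ, -1 ≤ i → i ≤ j →
        τ i ∈ K ∧ Nontrivial (redHomology 𝕜 (link K (τ i)) i)) ∧
      (∀ i : ℤ, 0 ≤ i → i ≤ j → τ i ⊂ τ (i - 1)) :=
  descending_homology_chain_general 𝕜 K hK σ j hj h
end

section
/- Let Δ be a simplicial complex and σ a face of Δ. Then link_Δ σ is a disjoint union of at least two simplices (full simplices on pairwise disjoint vertex sets) if and only if σ is a maximal intersection in Δ, i.e., σ is an intersection of at least two facets of Δ and is maximal with this property under inclusion. -/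
open Finset
open scoped Classical

/-- A facet of a simplicial complex: a face that is maximal with respect to inclusion. -/
def IsFacet {V : Type} (K : Set (Finset V)) (F : Finset V) : Prop :=
  F ∈ K ∧ ∀ G ∈ K, F ⊆ G → F = G

/-- `σ` is an intersection of more than one facet of `K`. -/
def IsFacetIntersection {V : Type} [DecidableEq V] [Fintype V] (K : Set (Finset V))
    (σ : Finset V) : Prop :=
  ∃ S : Finset (Finset V), 2 ≤ S.card ∧ (∀ F ∈ S, IsFacet K F) ∧ σ = S.inf id

/-- `σ` is a maximal intersection of `K`: an intersection of more than one facet which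
is maximal with this property with respect to inclusion. -/
def IsMaxIntersection {V : Type} [DecidableEq V] [Fintype V] (K : Set (Finset V))
    (σ : Finset V) : Prop :=
  IsFacetIntersection K σ ∧ ∀ τ : Finset V, IsFacetIntersection K τ → σ ⊆ τ → σ = τ

/-!
Removing `σ` sends the facets of `K` containing `σ` bijectively onto the facets of `link K σ`.
A complex is a disjoint union of at least two simplices exactly when it has at least two facets
and they are pairwise disjoint, and `σ` is a maximal intersection exactly when at least two
facets contain `σ` and any two of them meet precisely in `σ`, i.e. become disjoint once `σ` is
removed.
-/

variable {V : Type}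

lemma Set.PairwiseDisjoint.isAntichain_subset {𝒜 : Set (Finset V)} (hdisj : 𝒜.PairwiseDisjoint id)
    (hne : ∀ F ∈ 𝒜, F.Nonempty) : IsAntichain (· ⊆ ·) 𝒜 := by
  intro F hF G hG hFG hsub
  have : Disjoint F F := (hdisj hF hG hFG).mono_right hsub
  exact (hne F hF).ne_empty (disjoint_self.1 this)

section Facets

variable [Fintype V] {L : Set (Finset V)} {F : Finset V}

noncomputable def facets (L : Set (Finset V)) : Finset (Finset V) := {F | IsFacet L F}

@[simp]
lemma mem_facets : F ∈ facets L ↔ IsFacet L F := by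
  simp [facets]

lemma exists_mem_facets_superset {s : Finset V} (hs : s ∈ L) : ∃ F ∈ facets L, s ⊆ F := by
  obtain ⟨F, ⟨hFL, hsF⟩, hmax⟩ :=
    Set.Finite.exists_maximalFor id {G | G ∈ L ∧ s ⊆ G} (Set.toFinite _) ⟨s, hs, subset_rfl⟩
  exact ⟨F, mem_facets.2 ⟨hFL, fun G hG hFG => hFG.antisymm (hmax ⟨hG, hsF.trans hFG⟩ hFG)⟩, hsF⟩

lemma IsComplex.eq_setOf_subset_facets (hL : IsComplex L) :
    L = {t | ∃ F ∈ facets L, t ⊆ F} := by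
  ext t
  refine ⟨exists_mem_facets_superset, ?_⟩
  rintro ⟨F, hF, htF⟩
  exact hL F (mem_facets.1 hF).1 t htF

lemma facets_setOf_subset {𝒜 : Finset (Finset V)}
    (h𝒜 : IsAntichain (· ⊆ ·) (𝒜 : Set (Finset V))) :
    facets {t | ∃ F ∈ 𝒜, t ⊆ F} = 𝒜 := by
  ext F
  simp only [mem_facets, IsFacet, Set.mem_ofPred_eq]
  constructor
  · rintro ⟨⟨A, hA, hFA⟩, hmax⟩
    rwa [hmax A ⟨A, hA, subset_rfl⟩ hFA]
  · rintro hF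
    refine ⟨⟨F, hF, subset_rfl⟩, fun G ⟨A, hA, hGA⟩ hFG => ?_⟩
    have hFA : F = A := h𝒜.eq hF hA (hFG.trans hGA)
    exact hFG.antisymm (hFA ▸ hGA)

lemma nonempty_of_mem_facets (hL : (facets L).Nontrivial) (hF : F ∈ facets L) : F.Nonempty := by
  rw [nonempty_iff_ne_empty]
  rintro rfl
  obtain ⟨G, hG, hGne⟩ := hL.exists_ne ∅
  exact hGne ((mem_facets.1 hF).2 G (mem_facets.1 hG).1 (empty_subset G)).symm

theorem exists_disjoint_simplices_iff (hL : IsComplex L) :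
    (∃ 𝒜 : Finset (Finset V), 2 ≤ 𝒜.card ∧ (∀ F ∈ 𝒜, F.Nonempty) ∧
      (∀ F ∈ 𝒜, ∀ G ∈ 𝒜, F ≠ G → Disjoint F G) ∧ L = {t | ∃ F ∈ 𝒜, t ⊆ F}) ↔
    (facets L).Nontrivial ∧ (facets L : Set (Finset V)).PairwiseDisjoint id := by
  constructor
  · rintro ⟨𝒜, hcard, hne, hdisj, rfl⟩
    have h𝒜 : (𝒜 : Set (Finset V)).PairwiseDisjoint id := fun F hF G hG => hdisj F hF G hG
    rw [facets_setOf_subset (h𝒜.isAntichain_subset hne)]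
    exact ⟨one_lt_card_iff_nontrivial.1 hcard, h𝒜⟩
  · rintro ⟨hnontriv, hdisj⟩
    exact ⟨facets L, one_lt_card_iff_nontrivial.2 hnontriv,
      fun F => nonempty_of_mem_facets hnontriv, fun F hF G hG => hdisj hF hG,
      hL.eq_setOf_subset_facets⟩

end Facets

section Link

variable [DecidableEq V] {K : Set (Finset V)} {σ τ F G : Finset V}

lemma disjoint_sdiff_sdiff_iff : Disjoint (F \ σ) (G \ σ) ↔ F ∩ G ⊆ σ := by
  simp only [disjoint_left, subset_iff, mem_sdiff, mem_inter]
  grind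

lemma sdiff_mem_link (hσG : σ ⊆ G) (hG : G ∈ K) : G \ σ ∈ link K σ :=
  ⟨disjoint_sdiff, by rwa [union_sdiff_of_subset hσG]⟩

lemma isFacet_link_iff (hτ : Disjoint σ τ) : IsFacet (link K σ) τ ↔ IsFacet K (σ ∪ τ) := by
  constructor
  · rintro ⟨⟨-, hτK⟩, hmax⟩
    refine ⟨hτK, fun G hG hG' => ?_⟩
    have hσG : σ ⊆ G := union_subset_left hG'
    have hτG : τ ⊆ G \ σ := subset_sdiff.2 ⟨union_subset_right hG', hτ.symm⟩
    rw [hmax _ (sdiff_mem_link hσG hG) hτG, union_sdiff_of_subset hσG]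
  · rintro ⟨hτK, hmax⟩
    refine ⟨⟨hτ, hτK⟩, fun t ⟨hσt, htK⟩ hτt => ?_⟩
    have := hmax _ htK (union_subset_union_right hτt)
    rw [← union_sdiff_cancel_left hτ, this, union_sdiff_cancel_left hσt]

variable [Fintype V]

lemma facets_link : facets (link K σ) = {F ∈ facets K | σ ⊆ F}.image (· \ σ) := by
  ext τ
  simp only [mem_facets, mem_image, mem_filter]
  constructor
  · intro hτ
    have hστ : Disjoint σ τ := hτ.1.1
    exact ⟨σ ∪ τ, ⟨(isFacet_link_iff hστ).1 hτ, subset_union_left⟩, union_sdiff_cancel_left hστ⟩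
  · rintro ⟨F, ⟨hF, hσF⟩, rfl⟩
    rwa [isFacet_link_iff disjoint_sdiff, union_sdiff_of_subset hσF]

lemma isFacetIntersection_inter (hF : IsFacet K F) (hG : IsFacet K G) (hFG : F ≠ G) :
    IsFacetIntersection K (F ∩ G) :=
  ⟨{F, G}, (card_pair hFG).ge, by simp [hF, hG], by simp⟩

lemma IsFacetIntersection.exists_subset_inter (h : IsFacetIntersection K τ) :
    ∃ F ∈ facets K, ∃ G ∈ facets K, F ≠ G ∧ τ ⊆ F ∩ G := by
  obtain ⟨S, hcard, hS, rfl⟩ := h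
  obtain ⟨F, hF, G, hG, hFG⟩ := one_lt_card.1 hcard
  exact ⟨F, mem_facets.2 (hS F hF), G, mem_facets.2 (hS G hG), hFG,
    subset_inter (inf_le (f := id) hF) (inf_le (f := id) hG)⟩

lemma isMaxIntersection_iff_facets :
    IsMaxIntersection K σ ↔ {F ∈ facets K | σ ⊆ F}.Nontrivial ∧
      ({F ∈ facets K | σ ⊆ F} : Set (Finset V)).Pairwise fun F G => F ∩ G ⊆ σ := by
  simp only [Finset.Nontrivial, coe_filter]
  constructor
  · rintro ⟨hσ, hmax⟩
    obtain ⟨F, hF, G, hG, hFG, hσFG⟩ := hσ.exists_subset_inter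
    obtain ⟨hσF, hσG⟩ := subset_inter_iff.1 hσFG
    refine ⟨⟨F, ⟨hF, hσF⟩, G, ⟨hG, hσG⟩, hFG⟩, ?_⟩
    rintro A ⟨hA, hσA⟩ B ⟨hB, hσB⟩ hAB
    exact (hmax _ (isFacetIntersection_inter (mem_facets.1 hA) (mem_facets.1 hB) hAB)
      (subset_inter hσA hσB)).ge
  · rintro ⟨⟨F, ⟨hF, hσF⟩, G, ⟨hG, hσG⟩, hFG⟩, hpair⟩
    have hσ : σ = F ∩ G := (subset_inter hσF hσG).antisymm (hpair ⟨hF, hσF⟩ ⟨hG, hσG⟩ hFG)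
    refine ⟨hσ ▸ isFacetIntersection_inter (mem_facets.1 hF) (mem_facets.1 hG) hFG,
      fun τ hτ hστ => hστ.antisymm ?_⟩
    obtain ⟨A, hA, B, hB, hAB, hτAB⟩ := hτ.exists_subset_inter
    have hσAB := hστ.trans hτAB
    obtain ⟨hσA, hσB⟩ := subset_inter_iff.1 hσAB
    exact hτAB.trans (hpair ⟨hA, hσA⟩ ⟨hB, hσB⟩ hAB)

lemma isMaxIntersection_iff_link :
    IsMaxIntersection K σ ↔ (facets (link K σ)).Nontrivial ∧
      (facets (link K σ) : Set (Finset V)).PairwiseDisjoint id := by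
  have hinj : Set.InjOn (· \ σ) ↑({F ∈ facets K | σ ⊆ F} : Finset (Finset V)) :=
    (superset_injOn_sdiff σ).mono fun F hF => (mem_filter.1 hF).2
  rw [isMaxIntersection_iff_facets, facets_link, image_nontrivial_iff_of_injOn hinj, coe_image,
    hinj.pairwiseDisjoint_image, coe_filter]
  simp only [Set.PairwiseDisjoint, Set.Pairwise, Function.comp_def, id,
    disjoint_sdiff_sdiff_iff]

end Link

theorem link_disjoint_simplices_iff_maxIntersection_general {V : Type} [DecidableEq V]
    [Fintype V] (K : Set (Finset V)) (hK : IsComplex K) (σ : Finset V) :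
    (∃ 𝒜 : Finset (Finset V), 2 ≤ 𝒜.card ∧ (∀ F ∈ 𝒜, F.Nonempty) ∧
      (∀ F ∈ 𝒜, ∀ G ∈ 𝒜, F ≠ G → Disjoint F G) ∧
      link K σ = {t | ∃ F ∈ 𝒜, t ⊆ F}) ↔
    IsMaxIntersection K σ := by
  rw [exists_disjoint_simplices_iff (link_isComplex hK σ), isMaxIntersection_iff_link]

/-- **Characterisation of maximal intersections.** The link of a face `σ` is a disjoint
union of at least two full simplices if and only if `σ` is a maximal intersection. -/
theorem link_disjoint_simplices_iff_maxIntersection {V : Type} [DecidableEq V]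
    [Fintype V] (K : Set (Finset V)) (hK : IsComplex K) (σ : Finset V) (hσ : σ ∈ K) :
    (∃ 𝒜 : Finset (Finset V), 2 ≤ 𝒜.card ∧ (∀ F ∈ 𝒜, F.Nonempty) ∧
      (∀ F ∈ 𝒜, ∀ G ∈ 𝒜, F ≠ G → Disjoint F G) ∧
      link K σ = {t | ∃ F ∈ 𝒜, t ⊆ F}) ↔
    IsMaxIntersection K σ :=
  link_disjoint_simplices_iff_maxIntersection_general K hK σ
end
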